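/- arXiv:2001.03434 — 5 statements merged into one kernel-verified Lean document; each statement's English description precedes it below -/
import Mathlib

section
/- For every linear isomorphism T of the Euclidean plane ℝ² there exists an orthonormal pair of vectors u, v in ℝ² such that the images T u and T v are orthogonal. (This is Tissot's theorem on the existence of 'principal tangents': every differentiable, nondegenerate map sends some pair of orthogonal directions to a pair of orthogonal directions.) -/
open RealInnerProductSpace

/-- The eigenbasis of the symmetric operator `T† T` works, since
`⟪T bᵢ, T bⱼ⟫ = ⟪T† T bᵢ, bⱼ⟫ = λᵢ ⟪bᵢ, bⱼ⟫`. -/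
theorem LinearMap.exists_orthonormalBasis_inner_apply_eq_zero {𝕜 E F : Type*} [RCLike 𝕜]
    [NormedAddCommGroup E] [InnerProductSpace 𝕜 E] [FiniteDimensional 𝕜 E]
    [NormedAddCommGroup F] [InnerProductSpace 𝕜 F] [FiniteDimensional 𝕜 F]
    (T : E →ₗ[𝕜] F) {n : ℕ} (hn : Module.finrank 𝕜 E = n) :
    ∃ b : OrthonormalBasis (Fin n) 𝕜 E, Pairwise fun i j ↦ inner 𝕜 (T (b i)) (T (b j)) = 0 := by
  have hS := T.isSymmetric_adjoint_comp_self
  refine ⟨hS.eigenvectorBasis hn, fun i j hij ↦ ?_⟩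
  dsimp only
  rw [← adjoint_inner_left, ← comp_apply, hS.apply_eigenvectorBasis, inner_smul_left,
    (hS.eigenvectorBasis hn).orthonormal.inner_eq_zero hij, mul_zero]

/-- Tissot's theorem on the existence of principal tangents: every linear
isomorphism of the Euclidean plane sends some orthonormal pair of vectors to a
pair of orthogonal vectors. -/
theorem tissot_principal_tangents
    (T : EuclideanSpace ℝ (Fin 2) ≃L[ℝ] EuclideanSpace ℝ (Fin 2)) :
    ∃ u v : EuclideanSpace ℝ (Fin 2), ‖u‖ = 1 ∧ ‖v‖ = 1 ∧ ⟪u, v⟫ = 0 ∧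
      ⟪T u, T v⟫ = 0 := by
  obtain ⟨b, hb⟩ := (T : EuclideanSpace ℝ (Fin 2) →ₗ[ℝ] EuclideanSpace ℝ (Fin 2))
    |>.exists_orthonormalBasis_inner_apply_eq_zero (finrank_euclideanSpace_fin (𝕜 := ℝ))
  exact ⟨b 0, b 1, b.orthonormal.1 0, b.orthonormal.1 1, b.orthonormal.2 (by decide),
    hb (by decide)⟩
end

section
/- Let T be a linear isomorphism of ℝ². Call T conformal if there is a constant c > 0 and a linear isometry O of ℝ² with T = c • O. If T is NOT conformal, then the orthonormal pair u, v with T u ⟂ T v is unique up to replacing u by −u, v by −v, and interchanging u and v: if u', v' is another orthonormal pair with T u' ⟂ T v', then (u' = u or u' = −u or u' = v or u' = −v). (This is Tissot's uniqueness statement: unless the mapping is angle-preserving at the point, the pair of orthogonal directions sent to orthogonal directions is unique.) -/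
open RealInnerProductSpace

/-!
Write the second pair in the basis `u, v`: `u' = a u + b v`, `v' = c u + d v`. Orthogonality of
`u', v'` and of their images gives `a c + b d = 0` and `a c ‖T u‖² + b d ‖T v‖² = 0`. If
`‖T u‖ ≠ ‖T v‖` this forces `a c = b d = 0`, so `a = 0` or `b = 0` (as `(c, d) ≠ 0`) and
`u' = ±v` or `u' = ±u`. If `‖T u‖ = ‖T v‖`, the same expansion shows that `T` multiplies all
inner products by `‖T u‖²`, i.e. `T` is conformal.
-/

section

variable {E F : Type*} [NormedAddCommGroup E] [InnerProductSpace ℝ E]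
  [NormedAddCommGroup F] [InnerProductSpace ℝ F]

theorem inner_smul_add_smul_smul_add_smul {x y : F} (h : ⟪x, y⟫ = 0) (a b c d : ℝ) :
    ⟪a • x + b • y, c • x + d • y⟫ = a * c * ‖x‖ ^ 2 + b * d * ‖y‖ ^ 2 := by
  simp only [inner_add_left, inner_add_right, real_inner_smul_left, real_inner_smul_right,
    real_inner_self_eq_norm_sq, h, real_inner_comm x y]
  ring

theorem eq_inner_smul_add_inner_smul_of_finrank_eq_two (hE : Module.finrank ℝ E = 2)
    {u v : E} (hu : ‖u‖ = 1) (hv : ‖v‖ = 1) (huv : ⟪u, v⟫ = 0) (w : E) :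
    w = ⟪u, w⟫ • u + ⟪v, w⟫ • v := by
  have : FiniteDimensional ℝ E := Module.finite_of_finrank_eq_succ hE
  have hon : Orthonormal ℝ ![u, v] := by simp [orthonormal_vecCons_iff, hu, hv, huv]
  have hspan := hon.linearIndependent.span_eq_top_of_card_eq_finrank (by simp [hE])
  simpa [Fin.sum_univ_two] using ((OrthonormalBasis.mk hon hspan.ge).sum_repr' w).symm

theorem IsConformalMap.exists_pos_smul {f : E →L[ℝ] F} (hf : IsConformalMap f) :
    ∃ c : ℝ, 0 < c ∧ ∃ O : E →ₗᵢ[ℝ] F, ∀ x, f x = c • O x := by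
  obtain ⟨c, hc, O, rfl⟩ := hf
  rcases hc.lt_or_gt with hneg | hpos
  · exact ⟨-c, neg_pos.2 hneg, (LinearIsometryEquiv.neg ℝ).toLinearIsometry.comp O,
      fun x => by simp⟩
  · exact ⟨c, hpos, O, fun x => rfl⟩

theorem isConformalMap_of_inner_map_eq_zero_of_norm_eq (hE : Module.finrank ℝ E = 2)
    {u v : E} (hu : ‖u‖ = 1) (hv : ‖v‖ = 1) (huv : ⟪u, v⟫ = 0) {T : E →L[ℝ] F}
    (hT : ⟪T u, T v⟫ = 0) (hTu : T u ≠ 0) (hnorm : ‖T u‖ = ‖T v‖) : IsConformalMap T := by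
  refine (isConformalMap_iff T).2 ⟨‖T u‖ ^ 2, by positivity, fun x y => ?_⟩
  rw [eq_inner_smul_add_inner_smul_of_finrank_eq_two hE hu hv huv x,
    eq_inner_smul_add_inner_smul_of_finrank_eq_two hE hu hv huv y]
  simp only [map_add, map_smul]
  rw [inner_smul_add_smul_smul_add_smul hT, inner_smul_add_smul_smul_add_smul huv, hu, hv, hnorm]
  ring

theorem eq_zero_or_eq_zero_of_mul_eq_zero_of_sq_add_sq_eq_one {a b c d : ℝ}
    (hcd : c ^ 2 + d ^ 2 = 1) (hac : a * c = 0) (hbd : b * d = 0) : a = 0 ∨ b = 0 := by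
  by_contra! h
  have hc : c = 0 := (mul_eq_zero.1 hac).resolve_left h.1
  have hd : d = 0 := (mul_eq_zero.1 hbd).resolve_left h.2
  simp [hc, hd] at hcd

theorem eq_or_eq_neg_of_inner_map_eq_zero_of_norm_ne (hE : Module.finrank ℝ E = 2)
    {u v : E} (hu : ‖u‖ = 1) (hv : ‖v‖ = 1) (huv : ⟪u, v⟫ = 0) {T : E →L[ℝ] F}
    (hT : ⟪T u, T v⟫ = 0) (hnorm : ‖T u‖ ≠ ‖T v‖)
    {u' v' : E} (hu' : ‖u'‖ = 1) (hv' : ‖v'‖ = 1) (huv' : ⟪u', v'⟫ = 0)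
    (hT' : ⟪T u', T v'⟫ = 0) :
    u' = u ∨ u' = -u ∨ u' = v ∨ u' = -v := by
  have hdecomp := eq_inner_smul_add_inner_smul_of_finrank_eq_two hE hu hv huv
  set a := ⟪u, u'⟫
  set b := ⟪v, u'⟫
  set c := ⟪u, v'⟫
  set d := ⟪v, v'⟫
  have inner_eq (p q r s : ℝ) := inner_smul_add_smul_smul_add_smul huv p q r s
  have inner_map_eq (p q r s : ℝ) := inner_smul_add_smul_smul_add_smul hT p q r s
  simp only [hu, hv, one_pow, mul_one] at inner_eq
  have hab : a ^ 2 + b ^ 2 = 1 := by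
    rw [← one_pow 2, ← hu', ← real_inner_self_eq_norm_sq, hdecomp u', inner_eq]; ring
  have hcd : c ^ 2 + d ^ 2 = 1 := by
    rw [← one_pow 2, ← hv', ← real_inner_self_eq_norm_sq, hdecomp v', inner_eq]; ring
  have horth : a * c + b * d = 0 := by rwa [hdecomp u', hdecomp v', inner_eq] at huv'
  have horth_map : a * c * ‖T u‖ ^ 2 + b * d * ‖T v‖ ^ 2 = 0 := by
    rwa [hdecomp u', hdecomp v', map_add, map_add, map_smul, map_smul, map_smul, map_smul,
      inner_map_eq] at hT'
  have hsq : ‖T u‖ ^ 2 - ‖T v‖ ^ 2 ≠ 0 :=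
    sub_ne_zero.2 fun h => hnorm ((sq_eq_sq₀ (norm_nonneg _) (norm_nonneg _)).1 h)
  have hac : a * c = 0 := by
    have : a * c * (‖T u‖ ^ 2 - ‖T v‖ ^ 2) = 0 := by
      linear_combination horth_map - ‖T v‖ ^ 2 * horth
    exact (mul_eq_zero.1 this).resolve_right hsq
  have hbd : b * d = 0 := by linear_combination horth - hac
  have hu'_eq : u' = a • u + b • v := hdecomp u'
  rcases eq_zero_or_eq_zero_of_mul_eq_zero_of_sq_add_sq_eq_one hcd hac hbd with ha | hb
  · rcases sq_eq_one_iff.1 (by simpa [ha] using hab : b ^ 2 = 1) with hb | hb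
    · exact Or.inr (Or.inr (Or.inl (by simp [hu'_eq, ha, hb])))
    · exact Or.inr (Or.inr (Or.inr (by simp [hu'_eq, ha, hb])))
  · rcases sq_eq_one_iff.1 (by simpa [hb] using hab : a ^ 2 = 1) with ha | ha
    · exact Or.inl (by simp [hu'_eq, ha, hb])
    · exact Or.inr (Or.inl (by simp [hu'_eq, ha, hb]))

end

/-- Tissot's uniqueness statement: if a linear isomorphism `T` of the Euclidean
plane is not conformal (i.e. not of the form `c • O` with `c > 0` and `O` a
linear isometry), then the orthonormal pair sent by `T` to an orthogonal pair
is unique up to sign changes and interchanging the two vectors. -/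
theorem tissot_principal_tangents_unique
    (T : EuclideanSpace ℝ (Fin 2) ≃L[ℝ] EuclideanSpace ℝ (Fin 2))
    (hnc : ¬ ∃ c : ℝ, 0 < c ∧
      ∃ O : EuclideanSpace ℝ (Fin 2) →ₗᵢ[ℝ] EuclideanSpace ℝ (Fin 2),
        ∀ x, T x = c • O x)
    (u v : EuclideanSpace ℝ (Fin 2))
    (hu : ‖u‖ = 1) (hv : ‖v‖ = 1) (huv : ⟪u, v⟫ = 0) (hT : ⟪T u, T v⟫ = 0)
    (u' v' : EuclideanSpace ℝ (Fin 2))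
    (hu' : ‖u'‖ = 1) (hv' : ‖v'‖ = 1) (huv' : ⟪u', v'⟫ = 0)
    (hT' : ⟪T u', T v'⟫ = 0) :
    u' = u ∨ u' = -u ∨ u' = v ∨ u' = -v := by
  have hE : Module.finrank ℝ (EuclideanSpace ℝ (Fin 2)) = 2 := finrank_euclideanSpace_fin
  by_cases hnorm : ‖T u‖ = ‖T v‖
  · have hTu : T u ≠ 0 := fun h => by simp [T.map_eq_zero_iff.1 h] at hu
    exact (hnc (isConformalMap_of_inner_map_eq_zero_of_norm_eq (T := T.toContinuousLinearMap)
      hE hu hv huv hT hTu hnorm).exists_pos_smul).elim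
  · exact eq_or_eq_neg_of_inner_map_eq_zero_of_norm_ne (T := T.toContinuousLinearMap)
      hE hu hv huv hT hnorm hu' hv' huv' hT'
end

section
/- Let T be a linear isomorphism of ℝ² and let u, v be an orthonormal pair with T u ⟂ T v, and set a = max(‖T u‖, ‖T v‖), b = min(‖T u‖, ‖T v‖). Then for every unit vector x in ℝ² one has b ≤ ‖T x‖ ≤ a. (Tissot: the principal tangents correspond to the directions in which the ratio of lengths of corresponding infinitesimal line elements attains its greatest and smallest values.) -/
/-!
Since `u, v` is an orthonormal basis of `ℝ²`, a unit vector is `x = c u + d v` with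
`c² + d² = 1`, and orthogonality of `T u, T v` gives `‖T x‖² = c² ‖T u‖² + d² ‖T v‖²`.
So `‖T x‖²` is a convex combination of `‖T u‖²` and `‖T v‖²`.
-/

open RealInnerProductSpace Module

section InnerProductSpace

variable {E : Type*} [NormedAddCommGroup E] [InnerProductSpace ℝ E]

theorem norm_smul_add_smul_sq_of_inner_eq_zero {p q : E} (h : ⟪p, q⟫ = 0) (c d : ℝ) :
    ‖c • p + d • q‖ ^ 2 = c ^ 2 * ‖p‖ ^ 2 + d ^ 2 * ‖q‖ ^ 2 := by
  have hpq : ⟪c • p, d • q⟫ = 0 := by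
    rw [real_inner_smul_left, real_inner_smul_right, h, mul_zero, mul_zero]
  rw [norm_add_sq_real, hpq, mul_zero, add_zero, norm_smul, norm_smul, mul_pow, mul_pow,
    Real.norm_eq_abs, Real.norm_eq_abs, sq_abs, sq_abs]

theorem orthonormal_pair {u v : E} (hu : ‖u‖ = 1) (hv : ‖v‖ = 1) (huv : ⟪u, v⟫ = 0) :
    Orthonormal ℝ ![u, v] := by
  refine ⟨Fin.forall_fin_two.2 ⟨hu, hv⟩, fun i j hij => ?_⟩
  fin_cases i <;> fin_cases j
  all_goals first
    | exact absurd rfl hij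
    | simpa using huv
    | simpa [real_inner_comm] using huv

theorem inner_smul_add_inner_smul_eq_self (hE : finrank ℝ E = 2) {u v : E} (hu : ‖u‖ = 1)
    (hv : ‖v‖ = 1) (huv : ⟪u, v⟫ = 0) (x : E) : ⟪u, x⟫ • u + ⟪v, x⟫ • v = x := by
  have hon := orthonormal_pair hu hv huv
  have hspan := hon.linearIndependent.span_eq_top_of_card_eq_finrank (by simp [hE])
  simpa [Fin.sum_univ_two] using (OrthonormalBasis.mk hon hspan.ge).sum_repr' x

end InnerProductSpace

theorem min_le_and_le_max_of_sq_eq {p q r c d : ℝ} (hp : 0 ≤ p) (hq : 0 ≤ q) (hr : 0 ≤ r)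
    (hcd : c ^ 2 + d ^ 2 = 1) (h : r ^ 2 = c ^ 2 * p ^ 2 + d ^ 2 * q ^ 2) :
    min p q ≤ r ∧ r ≤ max p q := by
  have hc := sq_nonneg c
  have hd := sq_nonneg d
  have hmin_p : min p q ^ 2 ≤ p ^ 2 := pow_le_pow_left₀ (le_min hp hq) (min_le_left p q) 2
  have hmin_q : min p q ^ 2 ≤ q ^ 2 := pow_le_pow_left₀ (le_min hp hq) (min_le_right p q) 2
  have hp_max : p ^ 2 ≤ max p q ^ 2 := pow_le_pow_left₀ hp (le_max_left p q) 2
  have hq_max : q ^ 2 ≤ max p q ^ 2 := pow_le_pow_left₀ hq (le_max_right p q) 2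
  constructor
  · refine (pow_le_pow_iff_left₀ (le_min hp hq) hr two_ne_zero).1 ?_
    nlinarith [mul_le_mul_of_nonneg_left hmin_p hc, mul_le_mul_of_nonneg_left hmin_q hd]
  · refine (pow_le_pow_iff_left₀ hr (hp.trans (le_max_left p q)) two_ne_zero).1 ?_
    nlinarith [mul_le_mul_of_nonneg_left hp_max hc, mul_le_mul_of_nonneg_left hq_max hd]

/-- Tissot: the principal tangents give the extremal length distortions.  If
`u, v` is an orthonormal pair sent by `T` to an orthogonal pair, then for every
unit vector `x` the length `‖T x‖` lies between `min (‖T u‖) (‖T v‖)` and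
`max (‖T u‖) (‖T v‖)`. -/
theorem tissot_extremal_distortion
    (T : EuclideanSpace ℝ (Fin 2) ≃L[ℝ] EuclideanSpace ℝ (Fin 2))
    (u v : EuclideanSpace ℝ (Fin 2))
    (hu : ‖u‖ = 1) (hv : ‖v‖ = 1) (huv : ⟪u, v⟫ = 0) (hT : ⟪T u, T v⟫ = 0) :
    ∀ x : EuclideanSpace ℝ (Fin 2), ‖x‖ = 1 →
      min ‖T u‖ ‖T v‖ ≤ ‖T x‖ ∧ ‖T x‖ ≤ max ‖T u‖ ‖T v‖ := by
  intro x hx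
  have hx_eq := inner_smul_add_inner_smul_eq_self (by simp) hu hv huv x
  have hcoeff : ⟪u, x⟫ ^ 2 + ⟪v, x⟫ ^ 2 = 1 := by
    have := norm_smul_add_smul_sq_of_inner_eq_zero huv ⟪u, x⟫ ⟪v, x⟫
    rw [hx_eq, hx, hu, hv] at this
    linarith
  have hTx : ‖T x‖ ^ 2 = ⟪u, x⟫ ^ 2 * ‖T u‖ ^ 2 + ⟪v, x⟫ ^ 2 * ‖T v‖ ^ 2 := by
    rw [← norm_smul_add_smul_sq_of_inner_eq_zero hT, ← map_smul, ← map_smul, ← map_add, hx_eq]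
  exact min_le_and_le_max_of_sq_eq (norm_nonneg _) (norm_nonneg _) (norm_nonneg _) hcoeff hTx
end

section
/- Let T be a linear isomorphism of ℝ², let u, v be an orthonormal pair with T u ⟂ T v, and set a = ‖T u‖, b = ‖T v‖ with a ≥ b. Then for every pair of unit vectors x, y in ℝ² with ⟪x, y⟫ = 0 (an orthogonal pair of directions), the cosine of the angle between the images satisfies |⟪T x, T y⟫| / (‖T x‖ · ‖T y‖) ≤ (a² − b²)/(a² + b²). (Tissot's bound on the maximal angular distortion of a right angle: it is attained when the directions bisect the principal tangents, and sin of the maximal deviation of a right angle equals (a² − b²)/(a² + b²).) -/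
/-!
Put `P = ‖T x‖²`, `Q = ‖T y‖²`, `I = ⟪T x, T y⟫`, `A = ‖T u‖²`, `B = ‖T v‖²`. In the basis `(u, v)`
the form `⟪T ·, T ·⟫` is diagonal with entries `A, B`; its trace and determinant, computed in the
orthonormal basis `(x, y)` instead, give `P + Q = A + B` and `P Q - I² = A B`. Hence
`(A - B)² P Q - I² (A + B)² = A B (P - Q)² ≥ 0`, which is the squared bound.
-/

open RealInnerProductSpace Module

section

variable {E F : Type*} [NormedAddCommGroup E] [InnerProductSpace ℝ E]
  [NormedAddCommGroup F] [InnerProductSpace ℝ F]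

namespace Orthonormal

variable {u v : E} (hE : finrank ℝ E = 2) (huv : Orthonormal ℝ ![u, v])
include hE huv

noncomputable def basisOfFinrankEqTwo : OrthonormalBasis (Fin 2) ℝ E :=
  OrthonormalBasis.mk huv (huv.linearIndependent.span_eq_top_of_card_eq_finrank (by simp [hE])).ge

theorem eq_inner_smul_add_inner_smul (x : E) : x = ⟪u, x⟫ • u + ⟪v, x⟫ • v := by
  simpa [basisOfFinrankEqTwo, Fin.sum_univ_two] using
    ((basisOfFinrankEqTwo hE huv).sum_repr' x).symm

theorem inner_eq_inner_mul_inner_add (x y : E) :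
    ⟪x, y⟫ = ⟪u, x⟫ * ⟪u, y⟫ + ⟪v, x⟫ * ⟪v, y⟫ := by
  simpa [basisOfFinrankEqTwo, Fin.sum_univ_two, real_inner_comm x] using
    ((basisOfFinrankEqTwo hE huv).sum_inner_mul_inner x y).symm

theorem inner_sq_add_inner_sq_eq_norm_sq (x : E) : ⟪u, x⟫ ^ 2 + ⟪v, x⟫ ^ 2 = ‖x‖ ^ 2 := by
  rw [← real_inner_self_eq_norm_sq, huv.inner_eq_inner_mul_inner_add hE x x]
  ring

end Orthonormal

theorem inner_smul_add_smul_of_inner_eq_zero {w w' : F} (h : ⟪w, w'⟫ = 0) (c s d t : ℝ) :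
    ⟪c • w + s • w', d • w + t • w'⟫ = c * d * ‖w‖ ^ 2 + s * t * ‖w'‖ ^ 2 := by
  simp only [inner_add_left, inner_add_right, real_inner_smul_left, real_inner_smul_right,
    real_inner_self_eq_norm_sq, h, real_inner_comm w w']
  ring

theorem sq_mul_sq_add_le_of_add_eq_of_mul_sub_sq_eq {P Q I A B : ℝ} (hA : 0 ≤ A) (hB : 0 ≤ B)
    (hsum : P + Q = A + B) (hprod : P * Q - I ^ 2 = A * B) :
    I ^ 2 * (A + B) ^ 2 ≤ (A - B) ^ 2 * (P * Q) := by
  have key : (A - B) ^ 2 * (P * Q) - I ^ 2 * (A + B) ^ 2 = A * B * (P - Q) ^ 2 := by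
    linear_combination (A + B) ^ 2 * hprod - A * B * (A + B + P + Q) * hsum
  linarith [mul_nonneg (mul_nonneg hA hB) (sq_nonneg (P - Q))]

variable {𝓕 : Type*} [FunLike 𝓕 E F] [LinearMapClass 𝓕 ℝ E F] (T : 𝓕) {u v : E}
  (hE : finrank ℝ E = 2) (huv : Orthonormal ℝ ![u, v]) (hT : ⟪T u, T v⟫ = 0)
include hE huv hT

theorem inner_map_map_eq_of_orthonormal (x y : E) :
    ⟪T x, T y⟫ = ⟪u, x⟫ * ⟪u, y⟫ * ‖T u‖ ^ 2 + ⟪v, x⟫ * ⟪v, y⟫ * ‖T v‖ ^ 2 := by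
  conv_lhs => rw [huv.eq_inner_smul_add_inner_smul hE x, huv.eq_inner_smul_add_inner_smul hE y]
  simpa only [map_add, map_smul] using inner_smul_add_smul_of_inner_eq_zero hT _ _ _ _

theorem norm_map_sq_eq_of_orthonormal (x : E) :
    ‖T x‖ ^ 2 = ⟪u, x⟫ ^ 2 * ‖T u‖ ^ 2 + ⟪v, x⟫ ^ 2 * ‖T v‖ ^ 2 := by
  rw [← real_inner_self_eq_norm_sq, inner_map_map_eq_of_orthonormal T hE huv hT]
  ring

variable {x y : E} (hxy : Orthonormal ℝ ![x, y])
include hxy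

theorem norm_map_sq_add_norm_map_sq_eq :
    ‖T x‖ ^ 2 + ‖T y‖ ^ 2 = ‖T u‖ ^ 2 + ‖T v‖ ^ 2 := by
  obtain ⟨hu1, -, hv1⟩ : ‖u‖ = 1 ∧ ⟪u, v⟫ = 0 ∧ ‖v‖ = 1 := by simpa using huv
  -- Parseval for `u` and `v` in the basis `(x, y)`
  have hu : ⟪u, x⟫ ^ 2 + ⟪u, y⟫ ^ 2 = 1 := by
    simpa [real_inner_comm u, hu1] using hxy.inner_sq_add_inner_sq_eq_norm_sq hE u
  have hv : ⟪v, x⟫ ^ 2 + ⟪v, y⟫ ^ 2 = 1 := by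
    simpa [real_inner_comm v, hv1] using hxy.inner_sq_add_inner_sq_eq_norm_sq hE v
  rw [norm_map_sq_eq_of_orthonormal T hE huv hT x, norm_map_sq_eq_of_orthonormal T hE huv hT y]
  linear_combination ‖T u‖ ^ 2 * hu + ‖T v‖ ^ 2 * hv

theorem norm_map_sq_mul_norm_map_sq_sub_inner_sq :
    ‖T x‖ ^ 2 * ‖T y‖ ^ 2 - ⟪T x, T y⟫ ^ 2 = ‖T u‖ ^ 2 * ‖T v‖ ^ 2 := by
  obtain ⟨hx1, hxy0, hy1⟩ : ‖x‖ = 1 ∧ ⟪x, y⟫ = 0 ∧ ‖y‖ = 1 := by simpa using hxy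
  have hx : ⟪u, x⟫ ^ 2 + ⟪v, x⟫ ^ 2 = 1 := by
    simpa [hx1] using huv.inner_sq_add_inner_sq_eq_norm_sq hE x
  have hy : ⟪u, y⟫ ^ 2 + ⟪v, y⟫ ^ 2 = 1 := by
    simpa [hy1] using huv.inner_sq_add_inner_sq_eq_norm_sq hE y
  have hxy' : ⟪u, x⟫ * ⟪u, y⟫ + ⟪v, x⟫ * ⟪v, y⟫ = 0 := by
    rw [← huv.inner_eq_inner_mul_inner_add hE x y, hxy0]
  rw [norm_map_sq_eq_of_orthonormal T hE huv hT x, norm_map_sq_eq_of_orthonormal T hE huv hT y,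
    inner_map_map_eq_of_orthonormal T hE huv hT]
  -- the left side is `‖T u‖² ‖T v‖² (⟪u, x⟫ ⟪v, y⟫ - ⟪v, x⟫ ⟪u, y⟫)²`, and by Lagrange's identity
  -- that determinant squares to `1 * 1 - 0²`
  linear_combination ‖T u‖ ^ 2 * ‖T v‖ ^ 2 *
    ((⟪u, y⟫ ^ 2 + ⟪v, y⟫ ^ 2) * hx + hy - (⟪u, x⟫ * ⟪u, y⟫ + ⟪v, x⟫ * ⟪v, y⟫) * hxy')

theorem abs_inner_map_div_norm_mul_norm_le (hab : ‖T v‖ ≤ ‖T u‖) :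
    |⟪T x, T y⟫| / (‖T x‖ * ‖T y‖) ≤ (‖T u‖ ^ 2 - ‖T v‖ ^ 2) / (‖T u‖ ^ 2 + ‖T v‖ ^ 2) := by
  have hab2 : 0 ≤ ‖T u‖ ^ 2 - ‖T v‖ ^ 2 := sub_nonneg.2 (pow_le_pow_left₀ (norm_nonneg _) hab 2)
  rcases (mul_nonneg (norm_nonneg (T x)) (norm_nonneg (T y))).eq_or_lt with h0 | hpos
  · rw [← h0, div_zero]
    positivity
  have hden : 0 < ‖T u‖ ^ 2 + ‖T v‖ ^ 2 := by
    rw [← norm_map_sq_add_norm_map_sq_eq T hE huv hT hxy]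
    exact add_pos_of_pos_of_nonneg (pow_pos (pos_of_mul_pos_left hpos (norm_nonneg _)) 2)
      (sq_nonneg _)
  rw [div_le_div_iff₀ hpos hden, ← sq_le_sq₀ (by positivity) (by positivity), mul_pow, mul_pow,
    mul_pow, sq_abs]
  exact sq_mul_sq_add_le_of_add_eq_of_mul_sub_sq_eq (sq_nonneg _) (sq_nonneg _)
    (norm_map_sq_add_norm_map_sq_eq T hE huv hT hxy)
    (norm_map_sq_mul_norm_map_sq_sub_inner_sq T hE huv hT hxy)

end

/-- Tissot's bound on the maximal angular distortion of a right angle: for any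
orthogonal pair of unit directions `x, y`, the cosine of the angle between the
images satisfies `|⟪T x, T y⟫| / (‖T x‖ ‖T y‖) ≤ (a² − b²)/(a² + b²)`,
where `a ≥ b` are the semi-axes of the Tissot indicatrix. -/
theorem tissot_angular_distortion_bound
    (T : EuclideanSpace ℝ (Fin 2) ≃L[ℝ] EuclideanSpace ℝ (Fin 2))
    (u v : EuclideanSpace ℝ (Fin 2))
    (hu : ‖u‖ = 1) (hv : ‖v‖ = 1) (huv : ⟪u, v⟫ = 0) (hT : ⟪T u, T v⟫ = 0)
    (a b : ℝ) (ha : a = ‖T u‖) (hb : b = ‖T v‖) (hab : a ≥ b) :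
    ∀ x y : EuclideanSpace ℝ (Fin 2), ‖x‖ = 1 → ‖y‖ = 1 → ⟪x, y⟫ = 0 →
      |⟪T x, T y⟫| / (‖T x‖ * ‖T y‖) ≤ (a ^ 2 - b ^ 2) / (a ^ 2 + b ^ 2) := by
  intro x y hx hy hxy
  subst ha hb
  exact abs_inner_map_div_norm_mul_norm_le T finrank_euclideanSpace_fin (by simp [hu, hv, huv]) hT
    (by simp [hx, hy, hxy]) hab
end

section
/- Let T be a linear isomorphism of ℝ² with |det T| = 1 (area-preserving), let u, v be an orthonormal pair with T u ⟂ T v, and set a = max(‖T u‖, ‖T v‖), b = min(‖T u‖, ‖T v‖). Then b = 1/a and a ≥ 1; moreover a = 1 if and only if T is a linear isometry. (For an area-preserving map, the Tissot indicatrix is an ellipse of area π with reciprocal semi-axes, and it is a circle exactly when the map is an isometry: an area-preserving map is conformal only if it is an isometry.) -/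
/-!
The Gram matrix of the images of an orthonormal basis is diagonal when those images are
orthogonal, so `|det T| = ‖T u‖ * ‖T v‖`; area preservation then gives `a * b = 1`. If `a = 1`,
both images are unit vectors, so `T` sends an orthonormal basis to an orthonormal basis and is an
isometry.
-/

open RealInnerProductSpace

namespace LinearMap

variable {𝕜 U V : Type*} [RCLike 𝕜] [NormedAddCommGroup U] [InnerProductSpace 𝕜 U]
  [NormedAddCommGroup V] [InnerProductSpace 𝕜 V] {ι : Type*} [Fintype ι]

theorem normDet_eq_prod_norm_of_pairwise_inner_eq_zero [FiniteDimensional 𝕜 U] (f : U →ₗ[𝕜] V)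
    (b : OrthonormalBasis ι 𝕜 U) (hf : Pairwise fun i j ↦ inner 𝕜 (f (b i)) (f (b j)) = 0) :
    f.normDet = ∏ i, ‖f (b i)‖ := by
  classical
  have hgram : Matrix.gram 𝕜 (f <| b ·) = Matrix.diagonal fun i ↦ ((‖f (b i)‖ ^ 2 : ℝ) : 𝕜) := by
    ext i j
    rcases eq_or_ne i j with rfl | hij
    · simp [Matrix.gram_apply, inner_self_eq_norm_sq_to_K]
    · simp [Matrix.gram_apply, hf hij, hij]
  have hsq := f.normDet_sq_eq_det_gram b
  rw [hgram, Matrix.det_diagonal, ← RCLike.ofReal_prod, RCLike.ofReal_inj, Finset.prod_pow] at hsq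
  exact (sq_eq_sq₀ f.normDet_nonneg (Finset.prod_nonneg fun i _ ↦ norm_nonneg _)).mp hsq

theorem norm_map_of_orthonormal [Nonempty ι] (f : U →ₗ[𝕜] U) {v : ι → U}
    (hv : Orthonormal 𝕜 v) (hcard : Fintype.card ι = Module.finrank 𝕜 U)
    (hf : Orthonormal 𝕜 (f ∘ v)) (x : U) : ‖f x‖ = ‖x‖ := by
  let b := basisOfOrthonormalOfCardEqFinrank hv hcard
  have hb : ⇑b = v := coe_basisOfOrthonormalOfCardEqFinrank hv hcard
  exact (f.isometryOfOrthonormal (hb ▸ hv) (hb ▸ hf)).norm_map x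

theorem abs_det_eq_prod_norm_of_orthonormal {E : Type*} [NormedAddCommGroup E]
    [InnerProductSpace ℝ E] [FiniteDimensional ℝ E] [Nonempty ι] (f : E →ₗ[ℝ] E) {v : ι → E}
    (hv : Orthonormal ℝ v) (hcard : Fintype.card ι = Module.finrank ℝ E)
    (hf : Pairwise fun i j ↦ ⟪f (v i), f (v j)⟫ = 0) :
    |LinearMap.det f| = ∏ i, ‖f (v i)‖ := by
  let b := (basisOfOrthonormalOfCardEqFinrank hv hcard).toOrthonormalBasis (by simpa using hv)
  have hb : ⇑b = v := by simp [b]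
  rw [← f.normDet_eq_abs_det, f.normDet_eq_prod_norm_of_pairwise_inner_eq_zero b (hb ▸ hf), hb]

end LinearMap

theorem one_le_max_of_mul_eq_one {x y : ℝ} (hx : 0 ≤ x) (h : x * y = 1) : 1 ≤ max x y := by
  rcases le_total x y with hxy | hxy
  · rw [max_eq_right hxy]; nlinarith
  · rw [max_eq_left hxy]; nlinarith

theorem max_eq_one_iff_of_mul_eq_one {x y : ℝ} (h : x * y = 1) :
    max x y = 1 ↔ x = 1 ∧ y = 1 := by
  refine ⟨fun hmax ↦ ?_, fun ⟨hx, hy⟩ ↦ by simp [hx, hy]⟩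
  rcases le_total x y with hxy | hxy
  · rw [max_eq_right hxy] at hmax; subst hmax; exact ⟨by simpa using h, rfl⟩
  · rw [max_eq_left hxy] at hmax; subst hmax; exact ⟨rfl, by simpa using h⟩

/-- For an area-preserving linear isomorphism `T` of the Euclidean plane
(`|det T| = 1`), the Tissot indicatrix is an ellipse with reciprocal semi-axes:
`b = 1/a` and `a ≥ 1`; moreover `a = 1` (the indicatrix is a circle) if and
only if `T` is a linear isometry, i.e. preserves the norm. -/
theorem tissot_area_preserving
    (T : EuclideanSpace ℝ (Fin 2) ≃L[ℝ] EuclideanSpace ℝ (Fin 2))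
    (hdet : |LinearMap.det (T.toLinearEquiv :
        EuclideanSpace ℝ (Fin 2) →ₗ[ℝ] EuclideanSpace ℝ (Fin 2))| = 1)
    (u v : EuclideanSpace ℝ (Fin 2))
    (hu : ‖u‖ = 1) (hv : ‖v‖ = 1) (huv : ⟪u, v⟫ = 0) (hT : ⟪T u, T v⟫ = 0)
    (a b : ℝ) (ha : a = max ‖T u‖ ‖T v‖) (hb : b = min ‖T u‖ ‖T v‖) :
    b = 1 / a ∧ 1 ≤ a ∧
      (a = 1 ↔ ∀ x : EuclideanSpace ℝ (Fin 2), ‖T x‖ = ‖x‖) := by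
  have hon : Orthonormal ℝ ![u, v] := by simp [hu, hv, huv]
  have hcard : Fintype.card (Fin 2) = Module.finrank ℝ (EuclideanSpace ℝ (Fin 2)) := by simp
  have hprod : ‖T u‖ * ‖T v‖ = 1 := by
    have hpair : Pairwise fun i j ↦ ⟪T (![u, v] i), T (![u, v] j)⟫ = 0 := by
      intro i j hij
      fin_cases i <;> fin_cases j <;> simp_all [real_inner_comm]
    simpa [Fin.prod_univ_two, hdet] using
      (T.toLinearEquiv.toLinearMap.abs_det_eq_prod_norm_of_orthonormal hon hcard hpair).symm
  have hab : a * b = 1 := by rw [ha, hb, max_mul_min, hprod]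
  refine ⟨eq_one_div_of_mul_eq_one_right hab, ha ▸ one_le_max_of_mul_eq_one (norm_nonneg _) hprod,
    ?_⟩
  rw [ha, max_eq_one_iff_of_mul_eq_one hprod]
  refine ⟨fun ⟨hTu, hTv⟩ ↦ T.toLinearEquiv.toLinearMap.norm_map_of_orthonormal hon hcard ?_,
    fun hiso ↦ ⟨(hiso u).trans hu, (hiso v).trans hv⟩⟩
  have hcomp : ⇑T.toLinearEquiv.toLinearMap ∘ ![u, v] = ![T u, T v] := (FinVec.map_eq _ _).symm
  rw [hcomp]
  simp [hTu, hTv, hT]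
end
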